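/- arXiv:1705.02768 — 2 statements merged into one kernel-verified Lean document; each statement's English description precedes it below -/
import Mathlib

section
/- Let m and n be integers with 3 ≤ m ≤ n and set u = m+n-2. Then the set of points of the projective space ℙ(ℂ^m) (one-dimensional subspaces spanned by a = (a_1, …, a_m) ≠ 0) such that the u×n matrix a_1A_1 + ⋯ + a_mA_m has rank < n over ℂ is finite and has cardinality exactly the binomial coefficient C(u, m-1). -/
/-!
Identify `a ∈ ℂ^m` with `p_a = a₁ + a₂ X + ⋯ + a_m X^(m-1)` and `v ∈ ℂ^n` likewise with `p_v`.
The product `p_a p_v` has degree `≤ u`, and `(∑ aₖ Aₖ) v` is its coefficient vector reduced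
modulo `X^u + 1`: the coefficient of `X^u` wraps around to row `0` with a minus sign. Hence
`(∑ aₖ Aₖ) v = 0` iff `X^u + 1 ∣ p_a p_v`, and by counting degrees such a `v ≠ 0` exists iff
`p_a` divides `X^u + 1` and has degree exactly `m - 1`. Scaling `p_a` to be monic identifies
`ℙ(ℂ^m)` with the monic polynomials of degree `< m`, and since `X^u + 1` has `u` distinct roots,
its monic divisors of degree `m - 1` are the products `∏_{ζ ∈ S} (X - ζ)` over the
`(m - 1)`-subsets `S` of its roots.
-/

/-- The `u×n` matrices `A_1, …, A_m` (here indexed by `k = 0, …, m-1`, so that `Amat K m n u k`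
is `A_{k+1}`): for `k ≤ m-2`, `Amat K m n u k` has the `n×n` identity occupying rows
`k, …, k+n-1` (0-based) and all other entries `0`; `Amat K m n u (m-1)` (that is, `A_m`)
has `-1` in position `(0, n-1)`, `1` in positions `(m-1+c, c)` for `0 ≤ c ≤ n-2`, and `0`
elsewhere. -/
def Amat (K : Type*) [Ring K] (m n u : ℕ) (k : ℕ) : Matrix (Fin u) (Fin n) K :=
  Matrix.of fun r c =>
    if k < m - 1 then (if (r : ℕ) = k + (c : ℕ) then 1 else 0)
    else if (r : ℕ) = 0 ∧ (c : ℕ) = n - 1 then -1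
    else if (r : ℕ) = m - 1 + (c : ℕ) then 1 else 0

open Polynomial Matrix
open scoped LinearAlgebra.Projectivization

theorem Matrix.rank_lt_card_width_iff_exists_mulVec_eq_zero {K ι κ : Type*} [Field K]
    [Fintype κ] (M : Matrix ι κ K) :
    M.rank < Fintype.card κ ↔ ∃ v ≠ 0, M *ᵥ v = 0 := by
  have h := LinearMap.finrank_range_add_finrank_ker M.mulVecLin
  rw [Module.finrank_fintype_fun_eq_card] at h
  rw [Matrix.rank, show _ < _ ↔ 0 < Module.finrank K (LinearMap.ker M.mulVecLin) by omega,
    Module.finrank_pos_iff_exists_ne_zero]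
  simp [and_comm]

namespace Polynomial

theorem natDegree_X_pow_add_one {R : Type*} [Semiring R] [Nontrivial R] (n : ℕ) :
    (X ^ n + 1 : R[X]).natDegree = n := by
  rw [← C_1, natDegree_X_pow_add_C]

theorem nodup_roots_X_pow_add_one {K : Type*} [Field K] {n : ℕ} (hn : (n : K) ≠ 0) :
    (X ^ n + 1 : K[X]).roots.Nodup := by
  refine nodup_roots ?_
  simpa [sub_eq_add_neg] using separable_X_pow_sub_C (-1 : K) hn (neg_ne_zero.mpr one_ne_zero)

theorem Monic.dvd_iff_eq_C_coeff_mul {R : Type*} [CommRing R] {W f : R[X]} (hW : W.Monic)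
    (hf : f.natDegree ≤ W.natDegree) :
    W ∣ f ↔ f = C (f.coeff W.natDegree) * W := by
  refine ⟨fun h => ?_, fun h => h ▸ dvd_mul_left W _⟩
  have h' := eq_leadingCoeff_mul_of_monic_of_dvd_of_natDegree_le hW h hf
  conv_rhs => rw [h', coeff_C_mul, hW.coeff_natDegree, mul_one]
  exact h'

theorem exists_dvd_mul_natDegree_le_iff {K : Type*} [Field K] {W p : K[X]} {d e : ℕ}
    (hW0 : W ≠ 0) (hW : W.natDegree = d + e) (hp0 : p ≠ 0) (hp : p.natDegree ≤ d) :
    (∃ q ≠ 0, q.natDegree ≤ e ∧ W ∣ p * q) ↔ p ∣ W ∧ p.natDegree = d := by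
  constructor
  · rintro ⟨q, hq0, hq, hdvd⟩
    have hpq0 : p * q ≠ 0 := mul_ne_zero hp0 hq0
    have hle := natDegree_le_of_dvd hdvd hpq0
    rw [natDegree_mul hp0 hq0] at hle
    have hassoc : Associated W (p * q) :=
      associated_of_dvd_of_natDegree_le hdvd hpq0 (by rw [natDegree_mul hp0 hq0]; omega)
    exact ⟨(dvd_mul_right p q).trans hassoc.symm.dvd, by omega⟩
  · rintro ⟨⟨q, rfl⟩, hpd⟩
    have hq0 : q ≠ 0 := right_ne_zero_of_mul hW0
    rw [natDegree_mul hp0 hq0] at hW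
    exact ⟨q, hq0, by omega, dvd_rfl⟩

theorem coeff_ofFn_mul_ofFn {R : Type*} [CommSemiring R] [DecidableEq R] {m n : ℕ}
    (a : Fin m → R) (v : Fin n → R) (j : ℕ) :
    (ofFn m a * ofFn n v).coeff j =
      ∑ k : Fin m, ∑ c : Fin n, if (k : ℕ) + c = j then a k * v c else 0 := by
  simp only [ofFn_eq_sum_monomial, Finset.sum_mul_sum, monomial_mul_monomial, finsetSum_coeff,
    coeff_monomial]

namespace Splits

variable {K : Type*} [Field K] {W : K[X]}

theorem setOf_monic_dvd_natDegree_eq [DecidableEq K] (hW : W.Splits) (hW0 : W ≠ 0)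
    (hnd : W.roots.Nodup) (d : ℕ) :
    {f : K[X] | f.Monic ∧ f ∣ W ∧ f.natDegree = d} =
      ((W.roots.toFinset.powersetCard d).image fun S => ∏ ζ ∈ S, (X - C ζ) : Set K[X]) := by
  ext f
  simp only [Set.mem_ofPred_eq, Finset.coe_image, Set.mem_image, Finset.mem_coe,
    Finset.mem_powersetCard]
  constructor
  · rintro ⟨hmon, hdvd, rfl⟩
    have hroots : f.roots ≤ W.roots := roots.le_of_dvd hW0 hdvd
    have hfnd : f.roots.Nodup := Multiset.nodup_of_le hroots hnd
    have hf : f.Splits := hW.of_dvd hW0 hdvd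
    refine ⟨f.roots.toFinset, ⟨Multiset.toFinset_subset.mpr (Multiset.subset_of_le hroots), ?_⟩, ?_⟩
    · rw [Multiset.toFinset_card_of_nodup hfnd, hf.natDegree_eq_card_roots]
    · rw [Finset.prod_eq_multiset_prod, Multiset.toFinset_val, Multiset.dedup_eq_self.mpr hfnd]
      exact (hf.eq_prod_roots_of_monic hmon).symm
  · rintro ⟨S, ⟨hS, rfl⟩, rfl⟩
    refine ⟨monic_prod_of_monic _ _ fun ζ _ => monic_X_sub_C ζ, ?_,
      natDegree_finsetProd_X_sub_C_eq_card S id⟩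
    exact (Multiset.prod_X_sub_C_dvd_iff_le_roots hW0 S.val).mpr
      ((Finset.val_le_iff.mpr hS).trans (Multiset.dedup_le _))

theorem ncard_setOf_monic_dvd_natDegree_eq (hW : W.Splits) (hW0 : W ≠ 0) (hnd : W.roots.Nodup)
    (d : ℕ) : {f : K[X] | f.Monic ∧ f ∣ W ∧ f.natDegree = d}.ncard = W.natDegree.choose d := by
  classical
  have hinj : Function.Injective fun S : Finset K => ∏ ζ ∈ S, (X - C ζ) := fun S T h =>
    Finset.val_injective (by simpa only [roots_prod_X_sub_C] using congrArg roots h)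
  rw [hW.setOf_monic_dvd_natDegree_eq hW0 hnd, Set.ncard_coe_finset,
    Finset.card_image_of_injective _ hinj, Finset.card_powersetCard,
    Multiset.toFinset_card_of_nodup hnd, hW.natDegree_eq_card_roots]

end Splits

end Polynomial

theorem Amat_apply {K : Type*} [Ring K] {m n u : ℕ} (hm : 2 ≤ m) (hu : u = m + n - 2)
    (k : Fin m) (r : Fin u) (c : Fin n) :
    Amat K m n u k r c =
      (if (k : ℕ) + c = r then 1 else 0) - (if (r : ℕ) = 0 ∧ (k : ℕ) + c = u then 1 else 0) := by
  have := k.isLt; have := r.isLt; have := c.isLt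
  simp only [Amat, Matrix.of_apply]
  split_ifs <;> first | omega | simp

section CommRing

variable {K : Type*} [CommRing K] [DecidableEq K] {m n u : ℕ}

theorem sum_smul_Amat_mulVec_apply (hm : 2 ≤ m) (hu : u = m + n - 2) (a : Fin m → K)
    (v : Fin n → K) (r : Fin u) :
    ((∑ k : Fin m, a k • Amat K m n u k) *ᵥ v) r =
      (ofFn m a * ofFn n v).coeff r - if (r : ℕ) = 0 then (ofFn m a * ofFn n v).coeff u else 0 := by
  simp only [Matrix.mulVec, dotProduct, Matrix.sum_apply, Matrix.smul_apply, Amat_apply hm hu,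
    coeff_ofFn_mul_ofFn, smul_eq_mul, Finset.sum_mul]
  rw [Finset.sum_comm]
  split_ifs with hr <;> simp [hr, mul_sub, sub_mul, Finset.sum_sub_distrib]

theorem sum_smul_Amat_mulVec_eq_zero_iff [Nontrivial K] (hm : 2 ≤ m) (hn : 1 ≤ n)
    (hu : u = m + n - 2) (a : Fin m → K) (v : Fin n → K) :
    (∑ k : Fin m, a k • Amat K m n u k) *ᵥ v = 0 ↔ (X ^ u + 1 : K[X]) ∣ ofFn m a * ofFn n v := by
  have hu0 : u ≠ 0 := by omega
  have hW : (X ^ u + 1 : K[X]).Monic := leadingCoeff_X_pow_add_one (Nat.pos_of_ne_zero hu0)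
  have hdeg : (ofFn m a * ofFn n v).natDegree ≤ u :=
    natDegree_mul_le.trans (by
      have := ofFn_natDegree_lt (by omega) a; have := ofFn_natDegree_lt hn v; omega)
  rw [hW.dvd_iff_eq_C_coeff_mul (hdeg.trans (natDegree_X_pow_add_one u).ge),
    natDegree_X_pow_add_one, funext_iff]
  simp only [sum_smul_Amat_mulVec_apply hm hu, Pi.zero_apply, sub_eq_zero]
  constructor
  · intro h
    ext j
    rcases lt_trichotomy j u with hj | rfl | hj
    · rw [h ⟨j, hj⟩]
      simp [coeff_C_mul, coeff_X_pow, coeff_one, hj.ne]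
    · simp [coeff_C_mul, coeff_X_pow, coeff_one, hu0]
    · rw [coeff_eq_zero_of_natDegree_lt (hdeg.trans_lt hj)]
      simp [coeff_C_mul, coeff_X_pow, coeff_one, hj.ne', show j ≠ 0 by omega]
  · intro h r
    rw [h]
    simp [coeff_C_mul, coeff_X_pow, coeff_one, r.isLt.ne, hu0]

end CommRing

theorem rank_sum_smul_Amat_lt_iff {K : Type*} [Field K] [DecidableEq K] {m n u : ℕ}
    (hm : 2 ≤ m) (hn : 1 ≤ n) (hu : u = m + n - 2) {a : Fin m → K} (ha : a ≠ 0) :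
    (∑ k : Fin m, a k • Amat K m n u k).rank < n ↔
      ofFn m a ∣ X ^ u + 1 ∧ (ofFn m a).natDegree = m - 1 := by
  have hW0 : (X ^ u + 1 : K[X]) ≠ 0 :=
    (show (X ^ u + 1 : K[X]).Monic from leadingCoeff_X_pow_add_one (by omega)).ne_zero
  have hWdeg : (X ^ u + 1 : K[X]).natDegree = (m - 1) + (n - 1) := by
    rw [natDegree_X_pow_add_one]; omega
  rw [← exists_dvd_mul_natDegree_le_iff hW0 hWdeg ((map_ne_zero_iff _ (injective_ofFn m)).mpr ha)
    (Nat.le_sub_one_of_lt (ofFn_natDegree_lt (by omega) a))]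
  have hrank := rank_lt_card_width_iff_exists_mulVec_eq_zero (∑ k : Fin m, a k • Amat K m n u k)
  rw [Fintype.card_fin] at hrank
  simp only [hrank, sum_smul_Amat_mulVec_eq_zero_iff hm hn hu]
  constructor
  · rintro ⟨v, hv, h⟩
    exact ⟨ofFn n v, (map_ne_zero_iff _ (injective_ofFn n)).mpr hv,
      Nat.le_sub_one_of_lt (ofFn_natDegree_lt hn v), h⟩
  · rintro ⟨q, hq0, hq, h⟩
    have hq' : ofFn n (toFn n q) = q := ofFn_comp_toFn_eq_id_of_natDegree_lt (by omega)
    refine ⟨toFn n q, fun h0 => hq0 ?_, by rwa [hq']⟩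
    rw [← hq', h0, map_zero]

namespace Projectivization

variable {K : Type*} [Field K] [DecidableEq K] {m : ℕ}

noncomputable def monicPoly (x : ℙ K (Fin m → K)) : K[X] :=
  ofFn m ((ofFn m x.rep).leadingCoeff⁻¹ • x.rep)

theorem leadingCoeff_ofFn_rep_ne_zero (x : ℙ K (Fin m → K)) :
    (ofFn m x.rep).leadingCoeff ≠ 0 :=
  leadingCoeff_ne_zero.mpr ((map_ne_zero_iff _ (injective_ofFn m)).mpr x.rep_nonzero)

theorem monicPoly_eq (x : ℙ K (Fin m → K)) :
    x.monicPoly = C (ofFn m x.rep).leadingCoeff⁻¹ * ofFn m x.rep := by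
  rw [monicPoly, map_smul, smul_eq_C_mul]

theorem monic_monicPoly (x : ℙ K (Fin m → K)) : x.monicPoly.Monic := by
  rw [monicPoly_eq]
  exact monic_C_mul_of_mul_leadingCoeff_eq_one (inv_mul_cancel₀ x.leadingCoeff_ofFn_rep_ne_zero)

theorem monicPoly_dvd_iff (x : ℙ K (Fin m → K)) {f : K[X]} :
    x.monicPoly ∣ f ↔ ofFn m x.rep ∣ f := by
  rw [monicPoly_eq]
  exact (isUnit_C.mpr (inv_ne_zero x.leadingCoeff_ofFn_rep_ne_zero).isUnit).mul_left_dvd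

theorem natDegree_monicPoly (x : ℙ K (Fin m → K)) :
    x.monicPoly.natDegree = (ofFn m x.rep).natDegree := by
  rw [monicPoly_eq, natDegree_C_mul (inv_ne_zero x.leadingCoeff_ofFn_rep_ne_zero)]

theorem monicPoly_injective : Function.Injective (monicPoly : ℙ K (Fin m → K) → K[X]) := by
  intro x y h
  have hxy := injective_ofFn m h
  have hx := inv_ne_zero x.leadingCoeff_ofFn_rep_ne_zero
  rw [← x.mk_rep, ← y.mk_rep, mk_eq_mk_iff']
  refine ⟨(ofFn m x.rep).leadingCoeff⁻¹⁻¹ * (ofFn m y.rep).leadingCoeff⁻¹, ?_⟩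
  rw [mul_smul, ← hxy, smul_smul, inv_mul_cancel₀ hx, one_smul]

theorem mem_range_monicPoly {f : K[X]} (hf : f.Monic) (hdeg : f.natDegree < m) :
    f ∈ Set.range (monicPoly : ℙ K (Fin m → K) → K[X]) := by
  have hf' : ofFn m (toFn m f) = f := ofFn_comp_toFn_eq_id_of_natDegree_lt hdeg
  have hv : toFn m f ≠ 0 := fun h0 => hf.ne_zero (by rw [← hf', h0, map_zero])
  obtain ⟨t, ht⟩ := exists_smul_eq_mk_rep K _ hv
  refine ⟨mk K (toFn m f) hv, ?_⟩
  rw [monicPoly_eq, ← ht, Units.smul_def, map_smul, hf', smul_eq_C_mul, leadingCoeff_mul,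
    leadingCoeff_C, hf.leadingCoeff, mul_one, ← mul_assoc, ← C_mul, inv_mul_cancel₀ t.ne_zero,
    C_1, one_mul]

end Projectivization

theorem stmt4 (m n u : ℕ) (hm : 3 ≤ m) (hmn : m ≤ n) (hu : u = m + n - 2) :
    {x : Projectivization ℂ (Fin m → ℂ) |
        (∑ k : Fin m, x.rep k • Amat ℂ m n u (k : ℕ)).rank < n}.Finite ∧
      {x : Projectivization ℂ (Fin m → ℂ) |
        (∑ k : Fin m, x.rep k • Amat ℂ m n u (k : ℕ)).rank < n}.ncard =
        Nat.choose u (m - 1) := by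
  have hW0 : (X ^ u + 1 : ℂ[X]) ≠ 0 :=
    (show (X ^ u + 1 : ℂ[X]).Monic from leadingCoeff_X_pow_add_one (by omega)).ne_zero
  have hWsplit : (X ^ u + 1 : ℂ[X]).Splits := IsAlgClosed.splits _
  have hWnd := nodup_roots_X_pow_add_one (K := ℂ) (n := u) (Nat.cast_ne_zero.mpr (by omega))
  set D := {f : ℂ[X] | f.Monic ∧ f ∣ X ^ u + 1 ∧ f.natDegree = m - 1}
  have hset : {x : ℙ ℂ (Fin m → ℂ) | (∑ k : Fin m, x.rep k • Amat ℂ m n u (k : ℕ)).rank < n} =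
      Projectivization.monicPoly ⁻¹' D := by
    ext x
    simp only [Set.mem_ofPred_eq, Set.mem_preimage, D, rank_sum_smul_Amat_lt_iff (by omega)
      (by omega) hu x.rep_nonzero, x.monic_monicPoly, x.monicPoly_dvd_iff, x.natDegree_monicPoly,
      true_and]
  have hD : D ⊆ Set.range (Projectivization.monicPoly : ℙ ℂ (Fin m → ℂ) → ℂ[X]) :=
    fun f hf => Projectivization.mem_range_monicPoly hf.1 (by rw [hf.2.2]; omega)
  rw [hset]
  refine ⟨?_, ?_⟩
  · refine Set.Finite.preimage Projectivization.monicPoly_injective.injOn ?_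
    rw [show D = _ from hWsplit.setOf_monic_dvd_natDegree_eq hW0 hWnd (m - 1)]
    exact Finset.finite_toSet _
  · rw [Set.ncard_preimage_of_injective_subset_range Projectivization.monicPoly_injective hD,
      hWsplit.ncard_setOf_monic_dvd_natDegree_eq hW0 hWnd, natDegree_X_pow_add_one]
end

section
/- Let m and n be integers with 3 ≤ m ≤ n, set u = m+n-2, let a_1, …, a_{m-1} ∈ ℂ, and set N = a_1A_1 + ⋯ + a_{m-1}A_{m-1} - A_m ∈ ℂ^{u×n}. Then the following four conditions are equivalent: (1) rank N < n; (2) for every 1 ≤ i ≤ m-1, the n×n minor of N formed by rows i, m, m+1, …, u (and all n columns) vanishes; (3) λ_{u+t} = 0 for 1 ≤ t ≤ m-2 and λ_{u+m-1} = -1; (4) λ_{u+t} = -λ_t for all t ≥ 1. -/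
/-- `N = a_1 A_1 + ⋯ + a_{m-1} A_{m-1} - A_m` over ℂ, where `a` is 1-based. -/
noncomputable def Nmat (m n u : ℕ) (a : ℕ → ℂ) : Matrix (Fin u) (Fin n) ℂ :=
  (∑ k ∈ Finset.range (m - 1), a (k + 1) • Amat ℂ m n u k) - Amat ℂ m n u (m - 1)

lemma Nmat_apply (m n u : ℕ) (hm : 3 ≤ m) (a : ℕ → ℂ) (r : Fin u) (c : Fin n) :
    Nmat m n u a r c =
      (if (c:ℕ) ≤ (r:ℕ) ∧ (r:ℕ) - (c:ℕ) < m - 1 then a ((r:ℕ) - (c:ℕ) + 1) else 0)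
      + (if (r:ℕ) = 0 ∧ (c:ℕ) = n - 1 then 1 else 0)
      - (if (r:ℕ) = m - 1 + (c:ℕ) then 1 else 0) := by
  have hA : Amat ℂ m n u (m-1) r c =
      (if (r:ℕ) = 0 ∧ (c:ℕ) = n - 1 then -1 else 0)
      + (if (r:ℕ) = m - 1 + (c:ℕ) then 1 else 0) := by
    simp only [Amat, Matrix.of_apply]
    split_ifs with h1 h2 h3 h4 <;> first | omega | ring
  have hS : (∑ k ∈ Finset.range (m - 1), a (k + 1) • Amat ℂ m n u k) r c =
      (if (c:ℕ) ≤ (r:ℕ) ∧ (r:ℕ) - (c:ℕ) < m - 1 then a ((r:ℕ) - (c:ℕ) + 1) else 0) := by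
    rw [Matrix.sum_apply]
    have hterm : ∀ k ∈ Finset.range (m-1),
        (a (k + 1) • Amat ℂ m n u k) r c = if (r:ℕ) = k + (c:ℕ) then a (k+1) else 0 := by
      intro k hk
      simp only [Finset.mem_range] at hk
      simp only [Amat, Matrix.smul_apply, Matrix.of_apply, if_pos hk, smul_eq_mul]
      split_ifs <;> ring
    rw [Finset.sum_congr rfl hterm]
    by_cases h : (c:ℕ) ≤ (r:ℕ) ∧ (r:ℕ) - (c:ℕ) < m - 1
    · rw [if_pos h, Finset.sum_eq_single ((r:ℕ) - (c:ℕ))]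
      · rw [if_pos (by omega)]
      · intro b _ hb; rw [if_neg (by omega)]
      · intro hb; simp only [Finset.mem_range] at hb; omega
    · rw [if_neg h, Finset.sum_eq_zero]
      intro b hb; simp only [Finset.mem_range] at hb; rw [if_neg (by omega)]
  simp only [Nmat, Matrix.sub_apply, hS, hA]
  split_ifs <;> ring

lemma rec' (m : ℕ) (hm : 3 ≤ m) (a : ℕ → ℂ) (lam : ℕ → ℂ)
    (hrec : ∀ t : ℕ, m ≤ t → lam t = ∑ k ∈ Finset.Icc 1 (m - 1), a (m - k) * lam (t - k))
    (s : ℕ) (hs : 1 ≤ s) :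
    lam (s + (m - 1)) = ∑ k ∈ Finset.range (m - 1), a (k + 1) * lam (s + k) := by
  have h := hrec (s + (m - 1)) (by omega)
  rw [h]
  have h2 : ∑ k ∈ Finset.Icc 1 (m-1), a (m - k) * lam (s + (m-1) - k)
      = ∑ j ∈ Finset.range (m-1), a (m - (1+j)) * lam (s + (m-1) - (1+j)) := by
    rw [← Finset.Ico_add_one_right_eq_Icc, Finset.sum_Ico_eq_sum_range]
    norm_num
  rw [h2, ← Finset.sum_range_reflect]
  apply Finset.sum_congr rfl
  intro j hj
  simp only [Finset.mem_range] at hj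
  have e1 : m - (1 + (m - 1 - 1 - j)) = j + 1 := by omega
  have e2 : s + (m-1) - (1 + (m - 1 - 1 - j)) = s + j := by omega
  rw [e1, e2]

lemma key (m n u : ℕ) (hm : 3 ≤ m) (hmn : m ≤ n) (hu : u = m + n - 2)
    (a : ℕ → ℂ) (lam : ℕ → ℂ)
    (hlam0 : ∀ t : ℕ, 1 ≤ t → t ≤ m - 2 → lam t = 0)
    (hlam1 : lam (m - 1) = 1)
    (hrec : ∀ t : ℕ, m ≤ t → lam t = ∑ k ∈ Finset.Icc 1 (m - 1), a (m - k) * lam (t - k))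
    (r : Fin u) :
    ∑ c : Fin n, Nmat m n u a r c * lam (u - (c:ℕ)) =
      if (r:ℕ) < m - 1 then
        lam (u + m - 1 - (r:ℕ))
          - (∑ k ∈ Finset.Icc ((r:ℕ)+1) (m-2), a (k+1) * lam (u + k - (r:ℕ)))
          + (if (r:ℕ) = 0 then 1 else 0)
      else 0 := by
  have hn : 3 ≤ n := le_trans hm hmn
  have hru : (r:ℕ) < u := r.isLt
  have hdecomp : ∑ c : Fin n, Nmat m n u a r c * lam (u - (c:ℕ)) =
      (∑ c : Fin n, (if (c:ℕ) ≤ (r:ℕ) ∧ (r:ℕ) - (c:ℕ) < m - 1 then a ((r:ℕ) - (c:ℕ) + 1) else 0) * lam (u - (c:ℕ)))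
      + (∑ c : Fin n, (if (r:ℕ) = 0 ∧ (c:ℕ) = n - 1 then (1:ℂ) else 0) * lam (u - (c:ℕ)))
      - (∑ c : Fin n, (if (r:ℕ) = m - 1 + (c:ℕ) then (1:ℂ) else 0) * lam (u - (c:ℕ))) := by
    rw [← Finset.sum_add_distrib, ← Finset.sum_sub_distrib]
    apply Finset.sum_congr rfl
    intro c _
    rw [Nmat_apply m n u hm a r c]
    ring
  have hS2 : (∑ c : Fin n, (if (r:ℕ) = 0 ∧ (c:ℕ) = n - 1 then (1:ℂ) else 0) * lam (u - (c:ℕ)))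
      = (if (r:ℕ) = 0 then 1 else 0) := by
    by_cases hr0 : (r:ℕ) = 0
    · rw [if_pos hr0, Finset.sum_eq_single (⟨n-1, by omega⟩ : Fin n)]
      · rw [if_pos ⟨hr0, rfl⟩, one_mul]
        have e : u - (n-1) = m - 1 := by omega
        rw [e, hlam1]
      · intro b _ hb
        rw [if_neg, zero_mul]
        rintro ⟨-, hx⟩; exact hb (Fin.ext (by simpa using hx))
      · intro h; exact absurd (Finset.mem_univ _) h
    · rw [if_neg hr0, Finset.sum_eq_zero]
      intro b _; rw [if_neg (fun hx => hr0 hx.1), zero_mul]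
  have hS3 : (∑ c : Fin n, (if (r:ℕ) = m - 1 + (c:ℕ) then (1:ℂ) else 0) * lam (u - (c:ℕ)))
      = (if m - 1 ≤ (r:ℕ) then lam (u - (r:ℕ) + (m-1)) else 0) := by
    by_cases hr : m - 1 ≤ (r:ℕ)
    · rw [if_pos hr, Finset.sum_eq_single (⟨(r:ℕ) - (m-1), by omega⟩ : Fin n)]
      · rw [if_pos (by simp only []; omega), one_mul]
        have e : u - ((⟨(r:ℕ) - (m-1), by omega⟩ : Fin n) : ℕ) = u - (r:ℕ) + (m-1) := by
          simp only []; omega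
        rw [e]
      · intro b _ hb
        rw [if_neg (fun hx => hb (Fin.ext (by simp only []; omega))), zero_mul]
      · intro h; exact absurd (Finset.mem_univ _) h
    · rw [if_neg hr, Finset.sum_eq_zero]
      intro b _; rw [if_neg (by omega), zero_mul]
  have hS1 : (∑ c : Fin n, (if (c:ℕ) ≤ (r:ℕ) ∧ (r:ℕ) - (c:ℕ) < m - 1 then a ((r:ℕ) - (c:ℕ) + 1) else 0) * lam (u - (c:ℕ)))
      = ∑ k ∈ Finset.range (m-1), (if k ≤ (r:ℕ) ∧ (r:ℕ) - k < n then a (k+1) * lam (u - (r:ℕ) + k) else 0) := by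
    rw [Fin.sum_univ_eq_sum_range
      (fun c => (if c ≤ (r:ℕ) ∧ (r:ℕ) - c < m - 1 then a ((r:ℕ) - c + 1) else 0) * lam (u - c)) n]
    have l : ∀ c ∈ Finset.range n,
        (if c ≤ (r:ℕ) ∧ (r:ℕ) - c < m - 1 then a ((r:ℕ) - c + 1) else 0) * lam (u - c)
        = if c ≤ (r:ℕ) ∧ (r:ℕ) - c < m - 1 then a ((r:ℕ) - c + 1) * lam (u - c) else 0 := by
      intro c _; split_ifs <;> ring
    rw [Finset.sum_congr rfl l, ← Finset.sum_filter, ← Finset.sum_filter]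
    refine Finset.sum_nbij' (fun c => (r:ℕ) - c) (fun k => (r:ℕ) - k) ?_ ?_ ?_ ?_ ?_
    · intro c hc; simp only [Finset.mem_filter, Finset.mem_range] at *; omega
    · intro k hk; simp only [Finset.mem_filter, Finset.mem_range] at *; omega
    · intro c hc; simp only [Finset.mem_filter, Finset.mem_range] at hc
      show (r:ℕ) - ((r:ℕ) - c) = c; omega
    · intro k hk; simp only [Finset.mem_filter, Finset.mem_range] at hk
      show (r:ℕ) - ((r:ℕ) - k) = k; omega
    · intro c hc; simp only [Finset.mem_filter, Finset.mem_range] at hc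
      show a ((r:ℕ) - c + 1) * lam (u - c) = a ((r:ℕ) - c + 1) * lam (u - (r:ℕ) + ((r:ℕ) - c))
      have e : u - c = u - (r:ℕ) + ((r:ℕ) - c) := by omega
      rw [e]
  rw [hdecomp, hS1, hS2, hS3]
  by_cases hr : (r:ℕ) < m - 1
  · rw [if_pos hr, if_neg (show ¬(m - 1 ≤ (r:ℕ)) by omega)]
    have hK : ∑ k ∈ Finset.range (m-1), (if k ≤ (r:ℕ) ∧ (r:ℕ) - k < n then a (k+1) * lam (u - (r:ℕ) + k) else 0)
        = (∑ k ∈ Finset.range (m-1), a (k+1) * lam (u - (r:ℕ) + k))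
          - ∑ k ∈ Finset.Icc ((r:ℕ)+1) (m-2), a (k+1) * lam (u + k - (r:ℕ)) := by
      have e1 : ∀ k ∈ Finset.range (m-1),
          (if k ≤ (r:ℕ) ∧ (r:ℕ) - k < n then a (k+1) * lam (u - (r:ℕ) + k) else 0)
          = a (k+1) * lam (u - (r:ℕ) + k) - (if (r:ℕ)+1 ≤ k then a (k+1) * lam (u - (r:ℕ) + k) else 0) := by
        intro k hk; simp only [Finset.mem_range] at hk
        by_cases h1 : k ≤ (r:ℕ)
        · rw [if_pos ⟨h1, by omega⟩, if_neg (by omega), sub_zero]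
        · rw [if_neg (by omega), if_pos (by omega), sub_self]
      rw [Finset.sum_congr rfl e1, Finset.sum_sub_distrib]
      congr 1
      rw [← Finset.sum_filter]
      apply Finset.sum_congr
      · ext k; simp only [Finset.mem_filter, Finset.mem_range, Finset.mem_Icc]; omega
      · intro k hk; simp only [Finset.mem_Icc] at hk
        have e : u - (r:ℕ) + k = u + k - (r:ℕ) := by omega
        rw [e]
    rw [hK, ← rec' m hm a lam hrec (u - (r:ℕ)) (by omega)]
    have e : u - (r:ℕ) + (m - 1) = u + m - 1 - (r:ℕ) := by omega
    rw [e, sub_zero]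
  · rw [if_neg hr, if_neg (show ¬(r:ℕ) = 0 by omega), if_pos (show m - 1 ≤ (r:ℕ) by omega)]
    have hK : ∑ k ∈ Finset.range (m-1), (if k ≤ (r:ℕ) ∧ (r:ℕ) - k < n then a (k+1) * lam (u - (r:ℕ) + k) else 0)
        = ∑ k ∈ Finset.range (m-1), a (k+1) * lam (u - (r:ℕ) + k) := by
      apply Finset.sum_congr rfl
      intro k hk; simp only [Finset.mem_range] at hk
      by_cases h1 : (r:ℕ) - k < n
      · rw [if_pos ⟨by omega, h1⟩]
      · rw [if_neg (by omega), hlam0 (u - (r:ℕ) + k) (by omega) (by omega), mul_zero]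
    rw [hK, ← rec' m hm a lam hrec (u - (r:ℕ)) (by omega)]
    ring

lemma five (m n u : ℕ) (hm : 3 ≤ m) (hmn : m ≤ n) (hu : u = m + n - 2)
    (a : ℕ → ℂ) (lam : ℕ → ℂ)
    (hlam1 : lam (m - 1) = 1)
    (v : Fin n → ℂ)
    (hv : ∀ r : Fin u, m - 1 ≤ (r:ℕ) → ∑ c : Fin n, Nmat m n u a r c * v c = 0)
    (hv' : ∀ r : Fin u, m - 1 ≤ (r:ℕ) → ∑ c : Fin n, Nmat m n u a r c * lam (u - (c:ℕ)) = 0) :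
    ∀ c : Fin n, v c = v ⟨n-1, by omega⟩ * lam (u - (c:ℕ)) := by
  have hn : 3 ≤ n := le_trans hm hmn
  set μ : ℂ := v ⟨n-1, by omega⟩ with hμ
  set d : Fin n → ℂ := fun c => v c - μ * lam (u - (c:ℕ)) with hd
  have hdrow : ∀ r : Fin u, m - 1 ≤ (r:ℕ) → ∑ c : Fin n, Nmat m n u a r c * d c = 0 := by
    intro r hr
    have : ∑ c : Fin n, Nmat m n u a r c * d c
        = (∑ c : Fin n, Nmat m n u a r c * v c)
          - μ * ∑ c : Fin n, Nmat m n u a r c * lam (u - (c:ℕ)) := by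
      rw [Finset.mul_sum, ← Finset.sum_sub_distrib]
      apply Finset.sum_congr rfl
      intro c _; simp only [hd]; ring
    rw [this, hv r hr, hv' r hr, mul_zero, sub_zero]
  have main : ∀ j : ℕ, ∀ c : Fin n, n - 1 - j ≤ (c:ℕ) → d c = 0 := by
    intro j
    induction j with
    | zero =>
      intro c hc
      have hc' : (c:ℕ) = n - 1 := by have := c.isLt; omega
      have : c = (⟨n-1, by omega⟩ : Fin n) := Fin.ext (by simpa using hc')
      rw [this]
      simp only [hd]
      have e : u - (n-1) = m - 1 := by omega
      rw [e, hlam1, mul_one, ← hμ, sub_self]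
    | succ j ih =>
      intro c hc
      by_cases hcj : n - 1 - j ≤ (c:ℕ)
      · exact ih c hcj
      · have ht : (c:ℕ) = n - 2 - j := by omega
        have hj : j ≤ n - 2 := by omega
        set t : ℕ := (c:ℕ) with hT
        have htn : t < n - 1 := by omega
        have hrlt : m - 1 + t < u := by omega
        set r : Fin u := ⟨m - 1 + t, hrlt⟩ with hR
        have hrval : (r:ℕ) = m - 1 + t := rfl
        have heq := hdrow r (by omega)
        rw [Finset.sum_eq_single c] at heq
        · have hNrc : Nmat m n u a r c = -1 := by
            rw [Nmat_apply m n u hm a r c]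
            rw [if_neg (show ¬((c:ℕ) ≤ (r:ℕ) ∧ (r:ℕ) - (c:ℕ) < m - 1) by omega),
              if_neg (show ¬((r:ℕ) = 0 ∧ (c:ℕ) = n - 1) by omega),
              if_pos (show (r:ℕ) = m - 1 + (c:ℕ) by omega)]
            ring
          rw [hNrc] at heq
          linear_combination -heq
        · intro b _ hb
          by_cases hbt : (b:ℕ) < t
          · have hNrb : Nmat m n u a r b = 0 := by
              rw [Nmat_apply m n u hm a r b]
              rw [if_neg (show ¬((b:ℕ) ≤ (r:ℕ) ∧ (r:ℕ) - (b:ℕ) < m - 1) by omega),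
                if_neg (show ¬((r:ℕ) = 0 ∧ (b:ℕ) = n - 1) by omega),
                if_neg (show ¬((r:ℕ) = m - 1 + (b:ℕ)) by omega)]
              ring
            rw [hNrb, zero_mul]
          · have hbt' : t < (b:ℕ) := by
              rcases lt_or_eq_of_le (not_lt.mp hbt) with h | h
              · exact h
              · exact absurd (Fin.ext h.symm) hb
            rw [ih b (by omega), mul_zero]
        · intro h; exact absurd (Finset.mem_univ _) h
  intro c
  have := main (n - 1 - (c:ℕ)) c (by omega)
  simp only [hd] at this
  linear_combination this

lemma six (m n u : ℕ) (hm : 3 ≤ m) (hmn : m ≤ n) (hu : u = m + n - 2)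
    (a : ℕ → ℂ) (lam : ℕ → ℂ)
    (hyp : ∀ r : ℕ, r ≤ m - 2 →
      lam (u + m - 1 - r) - (∑ k ∈ Finset.Icc (r+1) (m-2), a (k+1) * lam (u + k - r))
        + (if r = 0 then (1:ℂ) else 0) = 0) :
    (∀ t : ℕ, 1 ≤ t → t ≤ m - 2 → lam (u + t) = 0) ∧ lam (u + m - 1) = -1 := by
  have part1 : ∀ t : ℕ, 1 ≤ t → t ≤ m - 2 → lam (u + t) = 0 := by
    intro t
    induction t using Nat.strong_induction_on with
    | _ t ih =>
      intro ht1 ht2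
      have h := hyp (m - 1 - t) (by omega)
      have e1 : u + m - 1 - (m - 1 - t) = u + t := by omega
      rw [e1] at h
      have hsum : ∑ k ∈ Finset.Icc (m - 1 - t + 1) (m-2), a (k+1) * lam (u + k - (m - 1 - t)) = 0 := by
        apply Finset.sum_eq_zero
        intro k hk
        simp only [Finset.mem_Icc] at hk
        have e2 : u + k - (m - 1 - t) = u + (k - (m - 1 - t)) := by omega
        rw [e2, ih (k - (m - 1 - t)) (by omega) (by omega) (by omega), mul_zero]
      rw [hsum, if_neg (by omega), sub_zero, add_zero] at h
      exact h
  refine ⟨part1, ?_⟩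
  have h := hyp 0 (by omega)
  have e1 : u + m - 1 - 0 = u + m - 1 := by omega
  rw [e1, if_pos rfl] at h
  have hsum : ∑ k ∈ Finset.Icc (0+1) (m-2), a (k+1) * lam (u + k - 0) = 0 := by
    apply Finset.sum_eq_zero
    intro k hk
    simp only [Finset.mem_Icc] at hk
    have e2 : u + k - 0 = u + k := by omega
    rw [e2, part1 k (by omega) (by omega), mul_zero]
  rw [hsum, sub_zero] at h
  linear_combination h

set_option maxHeartbeats 2000000 in
theorem stmt7 (m n u : ℕ) (hm : 3 ≤ m) (hmn : m ≤ n) (hu : u = m + n - 2)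
    (a : ℕ → ℂ) (lam : ℕ → ℂ)
    (hlam0 : ∀ t : ℕ, 1 ≤ t → t ≤ m - 2 → lam t = 0)
    (hlam1 : lam (m - 1) = 1)
    (hrec : ∀ t : ℕ, m ≤ t → lam t = ∑ k ∈ Finset.Icc 1 (m - 1), a (m - k) * lam (t - k)) :
    [(Nmat m n u a).rank < n,
      ∀ (i : ℕ) (_h1 : 1 ≤ i) (_h2 : i ≤ m - 1),
        ((Nmat m n u a).submatrix
          (fun j : Fin n =>
            if (j : ℕ) = 0 then (⟨i - 1, by omega⟩ : Fin u)
            else ⟨m - 2 + (j : ℕ), by have := j.isLt; omega⟩)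
          id).det = 0,
      (∀ t : ℕ, 1 ≤ t → t ≤ m - 2 → lam (u + t) = 0) ∧ lam (u + m - 1) = -1,
      ∀ t : ℕ, 1 ≤ t → lam (u + t) = -lam t].TFAE := by
  have hn : 3 ≤ n := le_trans hm hmn
  have hun : u = m + n - 2 := hu
  have hv' : ∀ r : Fin u, m - 1 ≤ (r:ℕ) →
      ∑ c : Fin n, Nmat m n u a r c * lam (u - (c:ℕ)) = 0 := by
    intro r hr
    rw [key m n u hm hmn hu a lam hlam0 hlam1 hrec r, if_neg (by omega)]
  -- (3) → (4)
  have h34 : ((∀ t : ℕ, 1 ≤ t → t ≤ m - 2 → lam (u + t) = 0) ∧ lam (u + m - 1) = -1) →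
      ∀ t : ℕ, 1 ≤ t → lam (u + t) = -lam t := by
    rintro ⟨h3a, h3b⟩ t
    induction t using Nat.strong_induction_on with
    | _ t ih =>
      intro ht
      by_cases h : t ≤ m - 2
      · rw [h3a t ht h, hlam0 t ht h, neg_zero]
      · by_cases h' : t = m - 1
        · subst h'
          have e : u + (m - 1) = u + m - 1 := by omega
          rw [e, h3b, hlam1]
        · have htm : m ≤ t := by omega
          rw [hrec t htm, hrec (u + t) (by omega), ← Finset.sum_neg_distrib]
          apply Finset.sum_congr rfl
          intro k hk
          simp only [Finset.mem_Icc] at hk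
          have e : u + t - k = u + (t - k) := by omega
          rw [e, ih (t - k) (by omega) (by omega)]
          ring
  -- (4) → (3)
  have h43 : (∀ t : ℕ, 1 ≤ t → lam (u + t) = -lam t) →
      ((∀ t : ℕ, 1 ≤ t → t ≤ m - 2 → lam (u + t) = 0) ∧ lam (u + m - 1) = -1) := by
    intro h4
    constructor
    · intro t ht1 ht2
      rw [h4 t ht1, hlam0 t ht1 ht2, neg_zero]
    · have e : u + m - 1 = u + (m - 1) := by omega
      rw [e, h4 (m - 1) (by omega), hlam1]
  -- (3) → (1)
  have h31 : ((∀ t : ℕ, 1 ≤ t → t ≤ m - 2 → lam (u + t) = 0) ∧ lam (u + m - 1) = -1) →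
      (Nmat m n u a).rank < n := by
    intro h3
    have hker : ∀ r : Fin u, ∑ c : Fin n, Nmat m n u a r c * lam (u - (c:ℕ)) = 0 := by
      intro r
      by_cases hr : m - 1 ≤ (r:ℕ)
      · exact hv' r hr
      · rw [key m n u hm hmn hu a lam hlam0 hlam1 hrec r, if_pos (by omega)]
        have hsum : ∑ k ∈ Finset.Icc ((r:ℕ)+1) (m-2), a (k+1) * lam (u + k - (r:ℕ)) = 0 := by
          apply Finset.sum_eq_zero
          intro k hk
          simp only [Finset.mem_Icc] at hk
          have e : u + k - (r:ℕ) = u + (k - (r:ℕ)) := by omega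
          rw [e, h3.1 (k - (r:ℕ)) (by omega) (by omega), mul_zero]
        rw [hsum, sub_zero]
        by_cases hr0 : (r:ℕ) = 0
        · rw [if_pos hr0, hr0]
          have e : u + m - 1 - 0 = u + m - 1 := by omega
          rw [e, h3.2]
          ring
        · rw [if_neg hr0, add_zero]
          have e : u + m - 1 - (r:ℕ) = u + (m - 1 - (r:ℕ)) := by omega
          rw [e, h3.1 (m - 1 - (r:ℕ)) (by omega) (by omega)]
    set N := Nmat m n u a with hN
    set w : Fin n → ℂ := fun c => lam (u - (c:ℕ)) with hw
    have hmv : N.mulVec w = 0 := by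
      funext r
      simpa [Matrix.mulVec, dotProduct, hw] using hker r
    have hwne : w ≠ 0 := by
      intro h
      have := congrFun h ⟨n-1, by omega⟩
      simp only [hw, Pi.zero_apply] at this
      rw [show u - (n-1) = m - 1 by omega, hlam1] at this
      exact one_ne_zero this
    have hkmem : w ∈ LinearMap.ker N.mulVecLin := by
      simp only [LinearMap.mem_ker, Matrix.mulVecLin_apply]
      exact hmv
    have hnt : Nontrivial (LinearMap.ker N.mulVecLin) :=
      ⟨⟨w, hkmem⟩, 0, fun h => hwne (congrArg Subtype.val h)⟩
    have hpos : 0 < Module.finrank ℂ (LinearMap.ker N.mulVecLin) :=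
      Module.finrank_pos_iff.mpr hnt
    have hrn := LinearMap.finrank_range_add_finrank_ker N.mulVecLin
    rw [Module.finrank_fintype_fun_eq_card, Fintype.card_fin] at hrn
    show N.rank < n
    rw [Matrix.rank]
    omega
  -- (1) → (2)
  have h12 : (Nmat m n u a).rank < n →
      ∀ (i : ℕ) (_h1 : 1 ≤ i) (_h2 : i ≤ m - 1),
        ((Nmat m n u a).submatrix
          (fun j : Fin n =>
            if (j : ℕ) = 0 then (⟨i - 1, by omega⟩ : Fin u)
            else ⟨m - 2 + (j : ℕ), by have := j.isLt; omega⟩)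
          id).det = 0 := by
    intro h1 i h1i h2i
    by_contra hdet
    set N := Nmat m n u a with hN
    set f : Fin n → Fin u := fun j : Fin n =>
      if (j : ℕ) = 0 then (⟨i - 1, by omega⟩ : Fin u)
      else ⟨m - 2 + (j : ℕ), by have := j.isLt; omega⟩ with hf
    set M := N.submatrix f id with hM
    have hnok : ¬ ∃ v : Fin n → ℂ, v ≠ 0 ∧ M.mulVec v = 0 := by
      intro ⟨v, hv0, hveq⟩
      exact hdet (Matrix.exists_mulVec_eq_zero_iff.mp ⟨v, hv0, hveq⟩)
    have hkerbot : ∀ v : Fin n → ℂ, N.mulVec v = 0 → v = 0 := by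
      intro v hvv
      by_contra hv0
      apply hnok
      refine ⟨v, hv0, ?_⟩
      have : M.mulVec v = (N.mulVec v) ∘ f := rfl
      rw [this, hvv]
      rfl
    have hker : LinearMap.ker N.mulVecLin = ⊥ := by
      rw [LinearMap.ker_eq_bot']
      intro v hvv
      exact hkerbot v (by simpa only [Matrix.mulVecLin_apply] using hvv)
    have hrn := LinearMap.finrank_range_add_finrank_ker N.mulVecLin
    rw [Module.finrank_fintype_fun_eq_card, Fintype.card_fin, hker, finrank_bot] at hrn
    rw [Matrix.rank] at h1
    omega
  -- (2) → (3)
  have h23 : (∀ (i : ℕ) (_h1 : 1 ≤ i) (_h2 : i ≤ m - 1),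
        ((Nmat m n u a).submatrix
          (fun j : Fin n =>
            if (j : ℕ) = 0 then (⟨i - 1, by omega⟩ : Fin u)
            else ⟨m - 2 + (j : ℕ), by have := j.isLt; omega⟩)
          id).det = 0) →
      ((∀ t : ℕ, 1 ≤ t → t ≤ m - 2 → lam (u + t) = 0) ∧ lam (u + m - 1) = -1) := by
    intro h2
    apply six m n u hm hmn hu a lam
    intro r hr
    have hdet := h2 (r+1) (by omega) (by omega)
    obtain ⟨v, hv0, hveq⟩ :=
      (Matrix.exists_mulVec_eq_zero_iff).mpr hdet
    have hrows : ∀ ρ : Fin u, m - 1 ≤ (ρ:ℕ) →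
        ∑ c : Fin n, Nmat m n u a ρ c * v c = 0 := by
      intro ρ hρ
      have hjlt : (ρ:ℕ) - (m-2) < n := by have := ρ.isLt; omega
      set j : Fin n := ⟨(ρ:ℕ) - (m-2), hjlt⟩ with hj
      have hj0 : ¬ (j:ℕ) = 0 := by
        show ¬ ((ρ:ℕ) - (m-2) = 0); omega
      have hcf := congrFun hveq j
      have hfj : (if (j : ℕ) = 0 then (⟨r + 1 - 1, by omega⟩ : Fin u)
          else ⟨m - 2 + (j : ℕ), by have := j.isLt; omega⟩) = ρ := by
        rw [if_neg hj0]
        exact Fin.ext (by show m - 2 + ((ρ:ℕ) - (m-2)) = (ρ:ℕ); omega)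
      simp only [Matrix.mulVec, dotProduct, Matrix.submatrix_apply, id,
        Pi.zero_apply] at hcf
      rw [hfj] at hcf
      exact hcf
    have hvw := five m n u hm hmn hu a lam hlam1 v hrows (fun ρ hρ => hv' ρ hρ)
    have hμ : v ⟨n-1, by omega⟩ ≠ 0 := by
      intro h
      apply hv0
      funext c
      rw [hvw c, h, zero_mul]
      rfl
    have h0 := congrFun hveq ⟨0, by omega⟩
    simp only [Matrix.mulVec, dotProduct, Matrix.submatrix_apply, id,
      Pi.zero_apply, ite_true, if_true] at h0
    have hrlt : r < u := by omega
    have hfr : (⟨r + 1 - 1, by omega⟩ : Fin u) = ⟨r, hrlt⟩ := Fin.ext (by show r + 1 - 1 = r; omega)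
    rw [hfr] at h0
    have h0' : (v ⟨n-1, by omega⟩) *
        (∑ c : Fin n, Nmat m n u a ⟨r, hrlt⟩ c * lam (u - (c:ℕ))) = 0 := by
      rw [Finset.mul_sum, ← h0]
      apply Finset.sum_congr rfl
      intro c _
      rw [hvw c]
      ring
    have hzero : ∑ c : Fin n, Nmat m n u a ⟨r, hrlt⟩ c * lam (u - (c:ℕ)) = 0 :=
      (mul_eq_zero.mp h0').resolve_left hμ
    rw [key m n u hm hmn hu a lam hlam0 hlam1 hrec ⟨r, hrlt⟩,
      if_pos (show ((⟨r, hrlt⟩ : Fin u) : ℕ) < m - 1 by show r < m - 1; omega)] at hzero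
    exact hzero
  tfae_have 1 → 2 := h12
  tfae_have 2 → 3 := h23
  tfae_have 3 → 1 := h31
  tfae_have 3 → 4 := h34
  tfae_have 4 → 3 := h43
  tfae_finish
end
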